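/- arXiv:2301.12447 — 2 statements merged into one kernel-verified Lean document; each statement's English description precedes it below -/
import Mathlib

section
/- Let 1 → A →^α B →^p C → 1 be a short exact sequence of continuous homomorphisms of topological groups, s: C → B a continuous homomorphic section of p, and suppose C strongly deformation retracts to its identity element e_C. Then α(A) is a strong deformation retract of B, via the homotopy G(b,t) = s(H(p(b⁻¹), 1−t))·b, where H is the deformation retraction of C to e_C. -/
open Topology unitInterval

/-- Given a short exact sequence `1 → A → B → C → 1` of topological groups with a
continuous homomorphic section `s` of `p`, and a strong deformation retraction `H`
of `C` to its identity, the homotopy `G(b,t) = s(H(p(b⁻¹), 1−t))·b` is a strong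
deformation retraction of `B` onto `α(A)`. -/
theorem exact_sequence_deformation_retract
    {A B C : Type*} [Group A] [TopologicalSpace A] [IsTopologicalGroup A]
    [Group B] [TopologicalSpace B] [IsTopologicalGroup B]
    [Group C] [TopologicalSpace C] [IsTopologicalGroup C]
    (α : A →* B) (p : B →* C) (s : C →* B)
    (hα : IsEmbedding α) (hrange : Set.range α = (p.ker : Set B))
    (hp : Continuous p) (hpsurj : Function.Surjective p)
    (hs : Continuous s) (hsec : ∀ c, p (s c) = c)
    (H : C × I → C) (hH : Continuous H)
    (hH0 : ∀ c, H (c, 0) = c)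
    (hHe : ∀ t, H (1, t) = 1)
    (hH1 : ∀ c, H (c, 1) = 1) :
    Continuous (fun bt : B × I => s (H (p bt.1⁻¹, σ bt.2)) * bt.1) ∧
    (∀ b : B, s (H (p b⁻¹, σ 0)) * b = b) ∧
    (∀ a : A, ∀ t : I, s (H (p (α a)⁻¹, σ t)) * (α a) = α a) ∧
    (∀ b : B, s (H (p b⁻¹, σ 1)) * b ∈ Set.range α) := by
  refine ⟨?_, ?_, ?_, ?_⟩
  · exact ((hs.comp (hH.comp (((hp.comp continuous_inv).comp continuous_fst).prodMk
      (continuous_symm.comp continuous_snd)))).mul continuous_fst)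
  · intro b
    simp [unitInterval.symm_zero, hH1]
  · intro a t
    have hpa : p (α a) = 1 := by
      have : α a ∈ (p.ker : Set B) := hrange ▸ Set.mem_range_self a
      exact this
    simp [hpa, hHe]
  · intro b
    rw [hrange]
    show s (H (p b⁻¹, σ 1)) * b ∈ p.ker
    simp [unitInterval.symm_one, hH0, hsec, MonoidHom.mem_ker]
end

section
/- Every C^k function f: ℝⁿ → ℝ that is homogeneous of degree k (an integer ≥ 0) is a homogeneous polynomial of degree k. -/
open Filter Topology

/-- Every `C^k` function `f : ℝⁿ → ℝ` that is homogeneous of degree `k` is a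
homogeneous polynomial of degree `k`. -/
theorem homogeneous_Ck_is_polynomial {n k : ℕ}
    (f : (Fin n → ℝ) → ℝ) (hf : ContDiff ℝ k f)
    (hhom : ∀ t : ℝ, 0 ≤ t → ∀ v : Fin n → ℝ, f (t • v) = t ^ k * f v) :
    ∃ P : MvPolynomial (Fin n) ℝ, P.IsHomogeneous k ∧
      ∀ v : Fin n → ℝ, f v = MvPolynomial.eval v P := by
  induction k generalizing f with
  | zero =>
    refine ⟨MvPolynomial.C (f 0), MvPolynomial.isHomogeneous_C _ _, fun v => ?_⟩
    have := hhom 0 le_rfl v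
    simp only [zero_smul, pow_zero, one_mul] at this
    simp [← this]
  | succ k IH =>
    have hdiff : Differentiable ℝ f := hf.differentiable (by norm_num)
    set g : Fin n → (Fin n → ℝ) → ℝ := fun i v => fderiv ℝ f v (Pi.single i 1) with hg
    -- smoothness of partial derivatives
    have hg_smooth : ∀ i, ContDiff ℝ k (g i) := by
      intro i
      exact (hf.fderiv_right (by exact_mod_cast le_refl (k+1))).clm_apply contDiff_const
    -- homogeneity for positive t
    have hpos : ∀ i, ∀ t : ℝ, 0 < t → ∀ v, g i (t • v) = t ^ k * g i v := by
      intro i t ht v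
      have h1 : HasFDerivAt f (fderiv ℝ f (t • v)) (t • v) := (hdiff _).hasFDerivAt
      have h2 : HasFDerivAt (fun w : Fin n → ℝ => t • w)
          (t • ContinuousLinearMap.id ℝ (Fin n → ℝ)) v := by
        simpa using (t • ContinuousLinearMap.id ℝ (Fin n → ℝ)).hasFDerivAt (x := v)
      have hA := h1.comp v h2
      have hB : HasFDerivAt (fun w => f (t • w)) ((t ^ (k+1) : ℝ) • fderiv ℝ f v) v := by
        have hfun : (fun w : Fin n → ℝ => f (t • w)) = fun w => t ^ (k+1) * f w :=
          funext (hhom t ht.le)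
        rw [hfun]
        exact (hdiff v).hasFDerivAt.const_mul _
      have := hA.unique hB
      have happ := congrArg (fun (L : (Fin n → ℝ) →L[ℝ] ℝ) => L (Pi.single i 1)) this
      simp only [ContinuousLinearMap.coe_comp', Function.comp_apply,
        ContinuousLinearMap.smul_apply, ContinuousLinearMap.coe_id', id_eq,
        smul_eq_mul] at happ
      -- happ : fderiv ℝ f (t • v) (t • Pi.single i 1) = t^(k+1) * fderiv ℝ f v (Pi.single i 1)
      rw [map_smul, smul_eq_mul] at happ
      have ht' : t ≠ 0 := ht.ne'
      field_simp [hg] at happ ⊢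
      rw [pow_succ] at happ
      nlinarith [happ]
    -- continuity gives the t = 0 case
    have hg_hom : ∀ i, ∀ t : ℝ, 0 ≤ t → ∀ v, g i (t • v) = t ^ k * g i v := by
      intro i t ht v
      rcases ht.lt_or_eq with h | h
      · exact hpos i t h v
      · subst h
        have hcont : Continuous (g i) := (hg_smooth i).continuous
        have l1 : Tendsto (fun t : ℝ => g i (t • v)) (𝓝[>] (0:ℝ)) (𝓝 (g i ((0:ℝ) • v))) := by
          have : Continuous (fun t : ℝ => g i (t • v)) :=
            hcont.comp (continuous_id.smul continuous_const)
          exact (this.tendsto 0).mono_left nhdsWithin_le_nhds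
        have l2 : Tendsto (fun t : ℝ => t ^ k * g i v) (𝓝[>] (0:ℝ)) (𝓝 ((0:ℝ) ^ k * g i v)) := by
          have : Continuous (fun t : ℝ => t ^ k * g i v) := (continuous_pow k).mul continuous_const
          exact (this.tendsto 0).mono_left nhdsWithin_le_nhds
        have heq : (fun t : ℝ => g i (t • v)) =ᶠ[𝓝[>] (0:ℝ)] fun t => t ^ k * g i v := by
          filter_upwards [self_mem_nhdsWithin] with t ht'
          exact hpos i t ht' v
        exact tendsto_nhds_unique (l1.congr' heq) l2
    -- apply the induction hypothesis to each partial derivative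
    choose P hP1 hP2 using fun i => IH (g i) (hg_smooth i) (fun t ht v => hg_hom i t ht v)
    -- Euler's identity
    have euler : ∀ v, (fderiv ℝ f v) v = ((k:ℝ) + 1) * f v := by
      intro v
      have h1 : HasFDerivAt f (fderiv ℝ f v) ((1:ℝ) • v) := by
        rw [one_smul]; exact (hdiff v).hasFDerivAt
      have h2 : HasDerivAt (fun t : ℝ => t • v) v 1 := by
        simpa using (hasDerivAt_id (1:ℝ)).smul_const v
      have hφ : HasDerivAt (fun t : ℝ => f (t • v)) ((fderiv ℝ f v) v) 1 :=
        h1.comp_hasDerivAt 1 h2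
      have hψ : HasDerivAt (fun t : ℝ => t ^ (k+1) * f v) (((k:ℝ) + 1) * f v) 1 := by
        have := (hasDerivAt_pow (k+1) (1:ℝ)).mul_const (f v)
        simpa [mul_comm] using this
      have heq : (fun t : ℝ => f (t • v)) =ᶠ[𝓝 (1:ℝ)] fun t => t ^ (k+1) * f v := by
        filter_upwards [Ioi_mem_nhds (zero_lt_one (α := ℝ))] with t ht
        exact hhom t ht.le v
      exact hφ.unique (hψ.congr_of_eventuallyEq heq)
    have hexp : ∀ v, (fderiv ℝ f v) v = ∑ i, v i * g i v := by
      intro v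
      have key : (fderiv ℝ f v) (∑ i, Pi.single i (v i)) = ∑ i, v i * g i v := by
        rw [map_sum]
        refine Finset.sum_congr rfl fun i _ => ?_
        have hs : (Pi.single i (v i) : Fin n → ℝ) = (v i) • (Pi.single i (1:ℝ) : Fin n → ℝ) := by
          rw [← Pi.single_smul, smul_eq_mul, mul_one]
        rw [hs, map_smul, smul_eq_mul]
      rw [← key, Finset.univ_sum_single]
    -- assemble the polynomial
    refine ⟨MvPolynomial.C (((k:ℝ)+1)⁻¹) * ∑ i, MvPolynomial.X i * P i, ?_, ?_⟩
    · have hsum : (∑ i, MvPolynomial.X i * P i : MvPolynomial (Fin n) ℝ).IsHomogeneous (k+1) := by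
        apply MvPolynomial.IsHomogeneous.sum
        intro i _
        simpa [Nat.add_comm] using (MvPolynomial.isHomogeneous_X ℝ i).mul (hP1 i)
      simpa using (MvPolynomial.isHomogeneous_C _ (((k:ℝ)+1)⁻¹)).mul hsum
    · intro v
      have hk : ((k:ℝ) + 1) ≠ 0 := by positivity
      have := (euler v).symm.trans (hexp v)
      -- (k+1) * f v = ∑ i, v i * g i v
      simp only [MvPolynomial.eval_mul, MvPolynomial.eval_C, MvPolynomial.eval_sum,
        MvPolynomial.eval_X]
      simp only [hP2] at this
      rw [inv_mul_eq_div, eq_div_iff hk]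
      linarith [this]
end
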